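/- arXiv:1609.01587 — 3 statements merged into one kernel-verified Lean document; each statement's English description precedes it below -/
import Mathlib

section
/- For vectors x, y in a real normed space with x ≠ 0, the following are equivalent: (1) there exists a norm-one functional p with p(x) = ‖x‖ and p(y) = 0; (2) for every real λ, ‖x + λy‖ ≥ ‖x‖. -/
/-!
Condition (2) says that `x` is at distance `‖x‖` from the line `ℝ ∙ y`, i.e. that the image of `x`
in the quotient `X ⧸ ℝ ∙ y` has norm `‖x‖`. A Hahn–Banach norming functional for that image,
composed with the quotient map (of norm at most one), is the functional required in (1).
Conversely, such a functional gives `‖x‖ = p (x + λy) ≤ ‖x + λy‖`.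
-/

open Metric

section Dual

variable {𝕜 E : Type*} [RCLike 𝕜] [SeminormedAddCommGroup E] [NormedSpace 𝕜 E]

theorem exists_dual_norm_le_one_apply_eq_infDist (K : Submodule 𝕜 E) (x : E) :
    ∃ g : StrongDual 𝕜 E, ‖g‖ ≤ 1 ∧ g x = infDist x K ∧ ∀ k ∈ K, g k = 0 := by
  obtain ⟨q, hq, hqx⟩ := exists_dual_vector'' 𝕜 (K.mkQ x)
  have hmkQ : ‖K.mkQL‖ ≤ 1 :=
    K.mkQL.opNorm_le_bound zero_le_one fun z ↦ by
      simpa using Submodule.Quotient.norm_mk_le K z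
  refine ⟨q.comp K.mkQL, ?_, ?_, fun k hk ↦ ?_⟩
  · calc ‖q.comp K.mkQL‖ ≤ ‖q‖ * ‖K.mkQL‖ := q.opNorm_comp_le _
      _ ≤ 1 := mul_le_one₀ hq (norm_nonneg _) hmkQ
  · rw [ContinuousLinearMap.comp_apply, Submodule.mkQL_apply, hqx]
    exact congrArg _ (QuotientAddGroup.norm_mk (S := K.toAddSubgroup) x)
  · simp [(Submodule.Quotient.mk_eq_zero K).2 hk]

theorem infDist_eq_norm_of_forall_norm_le_norm_add {K : Submodule 𝕜 E} {x : E}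
    (h : ∀ k ∈ K, ‖x‖ ≤ ‖x + k‖) : infDist x K = ‖x‖ := by
  refine le_antisymm ?_ ((le_infDist ⟨0, K.zero_mem⟩).2 fun k hk ↦ ?_)
  · simpa using infDist_le_dist_of_mem (x := x) (SetLike.mem_coe.2 K.zero_mem)
  · simpa [dist_eq_norm, sub_eq_add_neg] using h (-k) (K.neg_mem hk)

theorem forall_norm_le_norm_add_iff_exists_dual (K : Submodule 𝕜 E) (x : E) :
    (∀ k ∈ K, ‖x‖ ≤ ‖x + k‖) ↔
      ∃ g : StrongDual 𝕜 E, ‖g‖ ≤ 1 ∧ g x = ‖x‖ ∧ ∀ k ∈ K, g k = 0 := by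
  constructor
  · intro h
    obtain ⟨g, hg, hgx, hgK⟩ := exists_dual_norm_le_one_apply_eq_infDist K x
    exact ⟨g, hg, by rw [hgx, infDist_eq_norm_of_forall_norm_le_norm_add h], hgK⟩
  · rintro ⟨g, hg, hgx, hgK⟩ k hk
    calc ‖x‖ = ‖g (x + k)‖ := by simp [hgK k hk, hgx]
      _ ≤ ‖g‖ * ‖x + k‖ := g.le_opNorm _
      _ ≤ ‖x + k‖ := mul_le_of_le_one_left (norm_nonneg _) hg

theorem ContinuousLinearMap.norm_eq_one_of_apply_eq_norm {g : StrongDual 𝕜 E} {x : E}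
    (hg : ‖g‖ ≤ 1) (hx : ‖x‖ ≠ 0) (hgx : g x = ‖x‖) : ‖g‖ = 1 := by
  refine le_antisymm hg (le_of_mul_le_mul_right ?_ ((norm_nonneg x).lt_of_ne' hx))
  simpa [hgx] using g.le_opNorm x

end Dual

theorem stmt0 {X : Type*} [NormedAddCommGroup X] [NormedSpace ℝ X]
    (x y : X) (hx : x ≠ 0) :
    (∃ p : X →L[ℝ] ℝ, ‖p‖ = 1 ∧ p x = ‖x‖ ∧ p y = 0) ↔
      ∀ l : ℝ, ‖x‖ ≤ ‖x + l • y‖ := by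
  have hspan : (∀ k ∈ ℝ ∙ y, ‖x‖ ≤ ‖x + k‖) ↔ ∀ l : ℝ, ‖x‖ ≤ ‖x + l • y‖ := by
    simp only [Submodule.mem_span_singleton, forall_exists_index, forall_apply_eq_imp_iff]
  rw [← hspan, forall_norm_le_norm_add_iff_exists_dual]
  constructor
  · rintro ⟨p, hp, hpx, hpy⟩
    refine ⟨p, hp.le, by simpa using hpx, fun k hk ↦ ?_⟩
    obtain ⟨a, rfl⟩ := Submodule.mem_span_singleton.1 hk
    simp [hpy]
  · rintro ⟨p, hp, hpx, hpK⟩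
    exact ⟨p, p.norm_eq_one_of_apply_eq_norm hp (norm_ne_zero_iff.2 hx) hpx, by simpa using hpx,
      hpK y (Submodule.mem_span_singleton_self y)⟩
end

section
/- Let X be a real Banach space. For ε ∈ [0, 1/2] the inequalities λ⁻_X(ε/2) ≤ φ⁻_X(ε) ≤ λ⁻_X(2ε) and λ⁺_X(ε/2) ≤ φ⁺_X(ε) ≤ λ⁺_X(2ε) hold. -/
/-!
A unit vector `y` is Birkhoff–James orthogonal to `x` exactly when some `p ∈ J₁(x)` kills `y`
(Hahn–Banach in `X ⧸ ℝ ∙ y`). Given `z` at distance `ε` from `x` and `p ∈ J₁(x)`, write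
`z = (1 - r) • x + m • y` with `r = p (x - z)`, `p y = 0` and `|m - ε| ≤ r`. Then
`x + δ • y - (δ r / m) • x` is a convex combination of `x` and `z`, giving `λ(x, y, ε/2) ≤ r`,
and a norming functional of `z` gives `r ≤ λ(x, y, 2ε)`. Conversely, given `(x, y)`, the unit
vector `w = x + δ • y - λ(x, y, δ) • x` satisfies `p w = 1 - λ`; sliding along the normalized
segment from `x` to `w` (for `δ = 2ε`), resp. from `w` to `-x` (for `δ = ε/2`), to the point at
distance exactly `ε` from `x` produces values of `p (x - z)` below `λ(x, y, 2ε)`, resp. above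
`λ(x, y, ε/2)`. Comparing infima and suprema gives the theorem; for `ε = 0` everything is `0`.
-/

noncomputable def lam {X : Type*} [NormedAddCommGroup X] [NormedSpace ℝ X]
    (x y : X) (ε : ℝ) : ℝ :=
  sInf {l : ℝ | ‖x + ε • y - l • x‖ = 1}

noncomputable def lamMinus (X : Type*) [NormedAddCommGroup X] [NormedSpace ℝ X] (ε : ℝ) : ℝ :=
  sInf {r : ℝ | ∃ x y : X, ‖x‖ = 1 ∧ ‖y‖ = 1 ∧ (∀ t : ℝ, ‖x‖ ≤ ‖x + t • y‖) ∧ r = lam x y ε}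

noncomputable def lamPlus (X : Type*) [NormedAddCommGroup X] [NormedSpace ℝ X] (ε : ℝ) : ℝ :=
  sSup {r : ℝ | ∃ x y : X, ‖x‖ = 1 ∧ ‖y‖ = 1 ∧ (∀ t : ℝ, ‖x‖ ≤ ‖x + t • y‖) ∧ r = lam x y ε}

noncomputable def phiMinus (X : Type*) [NormedAddCommGroup X] [NormedSpace ℝ X] (ε : ℝ) : ℝ :=
  sInf {r : ℝ | ∃ (x z : X) (p : X →L[ℝ] ℝ), ‖x‖ = 1 ∧ ‖z‖ = 1 ∧ ‖x - z‖ = ε ∧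
    ‖p‖ = 1 ∧ p x = 1 ∧ r = p (x - z)}

noncomputable def phiPlus (X : Type*) [NormedAddCommGroup X] [NormedSpace ℝ X] (ε : ℝ) : ℝ :=
  sSup {r : ℝ | ∃ (x z : X) (p : X →L[ℝ] ℝ), ‖x‖ = 1 ∧ ‖z‖ = 1 ∧ ‖x - z‖ = ε ∧
    ‖p‖ = 1 ∧ p x = 1 ∧ r = p (x - z)}

open Set

lemma Set.Nonempty.of_forall_exists_mem {α β : Type*} {s : Set α} {t : Set β}
    {P : α → β → Prop} (h : ∀ a ∈ s, ∃ b ∈ t, P a b) (hs : s.Nonempty) : t.Nonempty :=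
  let ⟨a, ha⟩ := hs
  let ⟨b, hb, _⟩ := h a ha
  ⟨b, hb⟩

-- `sInf ∅ = sSup ∅ = 0` in `ℝ`, so these comparisons need the two sets to be empty together.
lemma Real.sInf_le_sInf_of_forall_exists_le {s t : Set ℝ} (hs : BddBelow s)
    (h : ∀ b ∈ t, ∃ a ∈ s, a ≤ b) (hst : s.Nonempty → t.Nonempty) : sInf s ≤ sInf t := by
  rcases t.eq_empty_or_nonempty with rfl | ht
  · rw [not_nonempty_iff_eq_empty.1 fun hs' => (hst hs').ne_empty rfl]
  · exact le_csInf ht fun b hb =>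
      let ⟨a, ha, hab⟩ := h b hb
      (csInf_le hs ha).trans hab

lemma Real.sSup_le_sSup_of_forall_exists_le {s t : Set ℝ} (ht : BddAbove t)
    (h : ∀ a ∈ s, ∃ b ∈ t, a ≤ b) (hts : t.Nonempty → s.Nonempty) : sSup s ≤ sSup t := by
  rcases s.eq_empty_or_nonempty with rfl | hs
  · rw [not_nonempty_iff_eq_empty.1 fun ht' => (hts ht').ne_empty rfl]
  · exact csSup_le hs fun a ha =>
      let ⟨b, hb, hab⟩ := h a ha
      hab.trans (le_csSup ht hb)

lemma Real.sInf_eq_zero_and_sSup_eq_zero_of_subset_zero {s : Set ℝ} (hs : s ⊆ {0}) :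
    sInf s = 0 ∧ sSup s = 0 := by
  rcases subset_singleton_iff_eq.1 hs with rfl | rfl <;> simp

section normed

variable {X : Type*} [NormedAddCommGroup X] [NormedSpace ℝ X]

section functional

variable {p : X →L[ℝ] ℝ} {x y z : X}

lemma apply_le_norm (hp : ‖p‖ = 1) (v : X) : p v ≤ ‖v‖ :=
  (le_abs_self _).trans (by simpa [hp] using p.le_opNorm v)

lemma apply_sub_mem_Icc (hz : ‖z‖ = 1) (hp : ‖p‖ = 1) (hpx : p x = 1) :
    p (x - z) ∈ Icc 0 ‖x - z‖ := by
  refine ⟨?_, apply_le_norm hp _⟩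
  have := apply_le_norm hp z
  rw [map_sub, hpx]
  linarith

lemma norm_le_norm_add_smul_of_apply_eq_zero (hx : ‖x‖ = 1) (hp : ‖p‖ = 1) (hpx : p x = 1)
    (hpy : p y = 0) (t : ℝ) : ‖x‖ ≤ ‖x + t • y‖ := by
  simpa [hx, hpx, hpy] using apply_le_norm hp (x + t • y)

lemma exists_norm_eq_one_apply_eq_one_apply_eq_zero (hx : ‖x‖ = 1)
    (hxy : ∀ t : ℝ, ‖x‖ ≤ ‖x + t • y‖) :
    ∃ p : X →L[ℝ] ℝ, ‖p‖ = 1 ∧ p x = 1 ∧ p y = 0 := by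
  set K := ℝ ∙ y
  have hmk : ‖(Submodule.Quotient.mk x : X ⧸ K)‖ = 1 := by
    refine le_antisymm (hx ▸ Submodule.Quotient.norm_mk_le K x)
      (QuotientAddGroup.le_norm_iff.2 fun m hm => ?_)
    obtain ⟨t, ht⟩ := Submodule.mem_span_singleton.1 ((Submodule.Quotient.eq K).1 hm)
    rw [eq_sub_iff_add_eq'] at ht
    simpa [hx, ← ht] using hxy t
  obtain ⟨g, hg, hgx⟩ := exists_dual_vector ℝ (Submodule.Quotient.mk x : X ⧸ K) (by simp [hmk])
  set p := g.comp K.mkQL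
  have hpx : p x = 1 := by simpa [p, hmk] using hgx
  have hp : ‖p‖ ≤ 1 := p.opNorm_le_bound zero_le_one fun v =>
    calc ‖p v‖ ≤ ‖g‖ * ‖(Submodule.Quotient.mk v : X ⧸ K)‖ := g.le_opNorm _
      _ ≤ 1 * ‖v‖ := by rw [hg]; gcongr; exact Submodule.Quotient.norm_mk_le K v
  refine ⟨p, le_antisymm hp ?_, hpx, ?_⟩
  · simpa [hpx, hx] using p.le_opNorm x
  · simp [p, (Submodule.Quotient.mk_eq_zero K).2 (Submodule.mem_span_singleton_self y)]

end functional

section segment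

variable {a b : X}

lemma norm_one_sub_smul_add_smul_le_one (ha : ‖a‖ = 1) (hb : ‖b‖ = 1) {θ : ℝ}
    (hθ : θ ∈ Icc (0 : ℝ) 1) : ‖(1 - θ) • a + θ • b‖ ≤ 1 :=
  calc ‖(1 - θ) • a + θ • b‖ ≤ ‖(1 - θ) • a‖ + ‖θ • b‖ := norm_add_le _ _
    _ = 1 := by
      rw [norm_smul, norm_smul, ha, hb, Real.norm_of_nonneg (sub_nonneg.2 hθ.2),
        Real.norm_of_nonneg hθ.1]
      ring

lemma one_sub_smul_add_smul_ne_zero (ha : ‖a‖ = 1) (hb : ‖b‖ = 1) (hab : b ≠ -a) {θ : ℝ}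
    (hθ : θ ∈ Icc (0 : ℝ) 1) : (1 - θ) • a + θ • b ≠ 0 := by
  intro h
  have hθ' : 1 - θ = θ := by
    simpa [norm_smul, ha, hb, abs_of_nonneg hθ.1, abs_of_nonneg (sub_nonneg.2 hθ.2)] using
      congrArg norm (eq_neg_of_add_eq_zero_left h)
  obtain rfl : θ = 1 / 2 := by linarith
  exact hab (by linear_combination (norm := module) (2 : ℝ) • h)

lemma exists_mem_Icc_norm_sub_normalize_eq (x : X) (ha : ‖a‖ = 1) (hb : ‖b‖ = 1)
    (hab : b ≠ -a) {ε : ℝ} (hlo : ‖x - a‖ ≤ ε) (hhi : ε ≤ ‖x - b‖) :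
    ∃ θ ∈ Icc (0 : ℝ) 1, ‖x - NormedSpace.normalize ((1 - θ) • a + θ • b)‖ = ε := by
  have hcont : ContinuousOn (fun θ : ℝ => ‖x - ‖(1 - θ) • a + θ • b‖⁻¹ • ((1 - θ) • a + θ • b)‖)
      (Icc 0 1) := by
    refine (continuousOn_const.sub (ContinuousOn.smul ?_ (by fun_prop))).norm
    exact (Continuous.continuousOn (by fun_prop)).inv₀
      fun θ hθ => norm_ne_zero_iff.2 (one_sub_smul_add_smul_ne_zero ha hb hab hθ)
  exact intermediate_value_Icc zero_le_one hcont ⟨by simpa [ha] using hlo, by simpa [hb] using hhi⟩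

variable {x w : X} {p : X →L[ℝ] ℝ}

lemma exists_norm_sub_eq_apply_ge (hx : ‖x‖ = 1) (hw : ‖w‖ = 1) (hp : ‖p‖ = 1)
    (hpx : p x = 1) (hpw : 0 ≤ p w) {ε : ℝ} (hε : 0 ≤ ε) (hxw : ε ≤ ‖x - w‖) :
    ∃ z : X, ‖z‖ = 1 ∧ ‖x - z‖ = ε ∧ p w ≤ p z := by
  have hwx : w ≠ -x := by rintro rfl; simp [hpx] at hpw; linarith
  obtain ⟨θ, hθ, hz⟩ := exists_mem_Icc_norm_sub_normalize_eq x hx hw hwx (by simpa) hxw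
  set v := (1 - θ) • x + θ • w
  have hv : v ≠ 0 := one_sub_smul_add_smul_ne_zero hx hw hwx hθ
  have hpv : p v = (1 - θ) + θ * p w := by simp [v, hpx]
  have hpw1 : p w ≤ 1 := hw ▸ apply_le_norm hp w
  have hwv : p w ≤ p v := by rw [hpv]; nlinarith [hθ.2]
  refine ⟨NormedSpace.normalize v, NormedSpace.norm_normalize_eq_one_iff.2 hv, hz, ?_⟩
  rw [NormedSpace.normalize, map_smul, smul_eq_mul, ← div_eq_inv_mul,
    le_div_iff₀ (norm_pos_iff.2 hv)]
  nlinarith [norm_one_sub_smul_add_smul_le_one hx hw hθ]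

lemma exists_norm_sub_eq_apply_le (hx : ‖x‖ = 1) (hw : ‖w‖ = 1) (hp : ‖p‖ = 1)
    (hpx : p x = 1) (hpw : 0 ≤ p w) (hwx : w ≠ x) {ε : ℝ} (hxw : ‖x - w‖ ≤ ε) (hε : ε ≤ 2) :
    ∃ z : X, ‖z‖ = 1 ∧ ‖x - z‖ = ε ∧ p z ≤ p w := by
  have hx' : ‖-x‖ = 1 := by rwa [norm_neg]
  have hxw' : -x ≠ -w := fun h => hwx (neg_injective h).symm
  obtain ⟨θ, hθ, hz⟩ := exists_mem_Icc_norm_sub_normalize_eq x hw hx' hxw' hxw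
    (by rwa [sub_neg_eq_add, ← two_smul ℝ, norm_smul, hx, Real.norm_two, mul_one])
  set v := (1 - θ) • w + θ • -x
  have hv : v ≠ 0 := one_sub_smul_add_smul_ne_zero hw hx' hxw' hθ
  have hpv : p v = (1 - θ) * p w - θ := by simp [v, hpx]; ring
  have hpw1 : p w ≤ 1 := hw ▸ apply_le_norm hp w
  have hnv : 1 - 2 * θ ≤ ‖v‖ := by
    have := norm_sub_norm_le ((1 - θ) • w) (θ • x)
    rw [norm_smul, norm_smul, hw, hx, Real.norm_of_nonneg (sub_nonneg.2 hθ.2),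
      Real.norm_of_nonneg hθ.1] at this
    simp only [v, smul_neg, ← sub_eq_add_neg]
    linarith
  refine ⟨NormedSpace.normalize v, NormedSpace.norm_normalize_eq_one_iff.2 hv, hz, ?_⟩
  rw [NormedSpace.normalize, map_smul, smul_eq_mul, ← div_eq_inv_mul,
    div_le_iff₀ (norm_pos_iff.2 hv)]
  calc p v ≤ p w * (1 - 2 * θ) := by rw [hpv]; nlinarith [hθ.1]
    _ ≤ p w * ‖v‖ := mul_le_mul_of_nonneg_left hnv hpw

end segment

section lam

variable {x y : X} {δ c : ℝ}

lemma one_sub_le_norm_add_smul_sub_smul (hx : ‖x‖ = 1) (hxy : ∀ t : ℝ, ‖x‖ ≤ ‖x + t • y‖)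
    {l : ℝ} (hl : l < 1) : 1 - l ≤ ‖x + δ • y - l • x‖ := by
  have hl' : 0 < 1 - l := sub_pos.2 hl
  have h : x + δ • y - l • x = (1 - l) • (x + ((1 - l)⁻¹ * δ) • y) := by
    match_scalars
    · ring
    · field_simp
  rw [h, norm_smul, Real.norm_of_nonneg hl'.le]
  simpa [hx] using mul_le_mul_of_nonneg_left (hxy ((1 - l)⁻¹ * δ)) hl'.le

lemma nonneg_of_norm_add_smul_sub_smul_eq_one (hx : ‖x‖ = 1)
    (hxy : ∀ t : ℝ, ‖x‖ ≤ ‖x + t • y‖) {l : ℝ} (hl : ‖x + δ • y - l • x‖ = 1) : 0 ≤ l := by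
  by_contra! h
  linarith [one_sub_le_norm_add_smul_sub_smul (δ := δ) hx hxy (h.trans zero_lt_one)]

lemma bddBelow_lam_set (hx : ‖x‖ = 1) (hxy : ∀ t : ℝ, ‖x‖ ≤ ‖x + t • y‖) :
    BddBelow {l : ℝ | ‖x + δ • y - l • x‖ = 1} :=
  ⟨0, fun _ hl => nonneg_of_norm_add_smul_sub_smul_eq_one hx hxy hl⟩

lemma lam_nonneg (hx : ‖x‖ = 1) (hxy : ∀ t : ℝ, ‖x‖ ≤ ‖x + t • y‖) : 0 ≤ lam x y δ :=
  Real.sInf_nonneg fun _ hl => nonneg_of_norm_add_smul_sub_smul_eq_one hx hxy hl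

lemma exists_mem_Icc_norm_add_smul_sub_smul_eq_one (hx : ‖x‖ = 1)
    (hxy : ∀ t : ℝ, ‖x‖ ≤ ‖x + t • y‖) (hc : 0 ≤ c) (hle : ‖x + δ • y - c • x‖ ≤ 1) :
    ∃ l ∈ Icc 0 c, ‖x + δ • y - l • x‖ = 1 :=
  intermediate_value_Icc' hc (by fun_prop)
    ⟨hle, by simpa using one_sub_le_norm_add_smul_sub_smul (δ := δ) hx hxy zero_lt_one⟩

lemma lam_le_of_norm_le (hx : ‖x‖ = 1) (hxy : ∀ t : ℝ, ‖x‖ ≤ ‖x + t • y‖) (hc : 0 ≤ c)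
    (hle : ‖x + δ • y - c • x‖ ≤ 1) : lam x y δ ≤ c := by
  obtain ⟨l, hl, hl1⟩ := exists_mem_Icc_norm_add_smul_sub_smul_eq_one hx hxy hc hle
  exact (csInf_le (bddBelow_lam_set hx hxy) hl1).trans hl.2

lemma norm_add_smul_sub_self_smul_le (hx : ‖x‖ = 1) (hy : ‖y‖ = 1) (hδ : δ ∈ Icc (0 : ℝ) 1) :
    ‖x + δ • y - δ • x‖ ≤ 1 := by
  rw [show x + δ • y - δ • x = (1 - δ) • x + δ • y by module]
  exact norm_one_sub_smul_add_smul_le_one hx hy hδ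

lemma lam_le_self (hx : ‖x‖ = 1) (hy : ‖y‖ = 1) (hxy : ∀ t : ℝ, ‖x‖ ≤ ‖x + t • y‖)
    (hδ : δ ∈ Icc (0 : ℝ) 1) : lam x y δ ≤ δ :=
  lam_le_of_norm_le hx hxy hδ.1 (norm_add_smul_sub_self_smul_le hx hy hδ)

lemma lam_set_nonempty (hx : ‖x‖ = 1) (hy : ‖y‖ = 1) (hxy : ∀ t : ℝ, ‖x‖ ≤ ‖x + t • y‖)
    (hδ : δ ∈ Icc (0 : ℝ) 1) : {l : ℝ | ‖x + δ • y - l • x‖ = 1}.Nonempty :=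
  let ⟨l, _, hl⟩ := exists_mem_Icc_norm_add_smul_sub_smul_eq_one hx hxy hδ.1
    (norm_add_smul_sub_self_smul_le hx hy hδ)
  ⟨l, hl⟩

lemma norm_add_smul_sub_lam_smul_eq_one (hx : ‖x‖ = 1) (hy : ‖y‖ = 1)
    (hxy : ∀ t : ℝ, ‖x‖ ≤ ‖x + t • y‖) (hδ : δ ∈ Icc (0 : ℝ) 1) :
    ‖x + δ • y - lam x y δ • x‖ = 1 :=
  (isClosed_eq (by fun_prop) continuous_const).csInf_mem (lam_set_nonempty hx hy hxy hδ)
    (bddBelow_lam_set hx hxy)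

lemma le_lam (hx : ‖x‖ = 1) (hy : ‖y‖ = 1) (hxy : ∀ t : ℝ, ‖x‖ ≤ ‖x + t • y‖)
    (hδ : δ ∈ Icc (0 : ℝ) 1) (h : ∀ l, ‖x + δ • y - l • x‖ = 1 → c ≤ l) : c ≤ lam x y δ :=
  le_csInf (lam_set_nonempty hx hy hxy hδ) h

end lam

section decomposition

variable {x y z : X} {r m δ : ℝ}

lemma exists_eq_smul_add_smul {p : X →L[ℝ] ℝ} (hx : ‖x‖ = 1) (hz : ‖z‖ = 1) (hp : ‖p‖ = 1)
    (hpx : p x = 1) (hxz : 0 < ‖x - z‖) (hxz' : ‖x - z‖ < 2) :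
    ∃ (y : X) (m : ℝ), ‖y‖ = 1 ∧ p y = 0 ∧ 0 < m ∧ |m - ‖x - z‖| ≤ p (x - z) ∧
      z = (1 - p (x - z)) • x + m • y := by
  set r := p (x - z)
  have hr := apply_sub_mem_Icc hz hp hpx
  set u := z - (1 - r) • x
  have hpu : p u = 0 := by simp [u, r, hpx]
  have hu : u ≠ 0 := by
    intro hu
    have hz' : z = (1 - r) • x := sub_eq_zero.1 hu
    have h1r : |1 - r| = 1 := by simpa [hz', norm_smul, hx] using hz
    rcases abs_eq (zero_le_one' ℝ) |>.1 h1r with h | h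
    · simp [hz', show r = 0 by linarith] at hxz
    · linarith [hr.2]
  refine ⟨‖u‖⁻¹ • u, ‖u‖, norm_smul_inv_norm hu, by simp [hpu], norm_pos_iff.2 hu, ?_, ?_⟩
  · calc |‖u‖ - ‖x - z‖| = |‖u‖ - ‖u - r • x‖| := by rw [norm_sub_rev x z]; congr 3; module
      _ ≤ ‖u - (u - r • x)‖ := abs_norm_sub_norm_le _ _
      _ = r := by rw [sub_sub_cancel, norm_smul, hx, mul_one, Real.norm_of_nonneg hr.1]
  · rw [smul_inv_smul₀ (norm_ne_zero_iff.2 hu)]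
    module

lemma lam_le_of_eq_smul_add_smul (hx : ‖x‖ = 1) (hxy : ∀ t : ℝ, ‖x‖ ≤ ‖x + t • y‖)
    (hz : ‖z‖ = 1) (hzxy : z = (1 - r) • x + m • y) (hr : 0 ≤ r) (hm : 0 < m)
    (hδ : δ ∈ Icc 0 m) : lam x y δ ≤ δ / m * r := by
  have hθ : δ / m ∈ Icc (0 : ℝ) 1 := ⟨div_nonneg hδ.1 hm.le, (div_le_one hm).2 hδ.2⟩
  apply lam_le_of_norm_le hx hxy (mul_nonneg hθ.1 hr)
  have h : x + δ • y - (δ / m * r) • x = (1 - δ / m) • x + (δ / m) • z := by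
    rw [hzxy]
    match_scalars <;> field_simp
    ring
  exact h ▸ norm_one_sub_smul_add_smul_le_one hx hz hθ

lemma le_lam_of_eq_smul_add_smul (hx : ‖x‖ = 1) (hy : ‖y‖ = 1)
    (hxy : ∀ t : ℝ, ‖x‖ ≤ ‖x + t • y‖) (hz : ‖z‖ = 1) (hzxy : z = (1 - r) • x + m • y)
    (hr : r ∈ Icc (0 : ℝ) 1) (hm : 0 < m) (hδ : δ ∈ Icc m 1) (hxz : ‖x - z‖ < 1) :
    r ≤ lam x y δ := by
  obtain ⟨q, hq, hqz⟩ := exists_dual_vector ℝ z (by simp [hz])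
  replace hqz : q z = 1 := by simpa [hz] using hqz
  have hqx : 0 < q x := by
    have := apply_le_norm hq (z - x)
    rw [map_sub, hqz, norm_sub_rev] at this
    linarith
  have hqx1 : q x ≤ 1 := hx ▸ apply_le_norm hq x
  have hqzxy : (1 - r) * q x + m * q y = 1 := by simpa [hzxy] using hqz
  have hqy : 0 ≤ q y := by nlinarith [hr.1, hr.2]
  refine le_lam hx hy hxy ⟨hm.le.trans hδ.1, hδ.2⟩ fun l hl => ?_
  have hql : (1 - l) * q x + δ * q y ≤ 1 := by
    have := apply_le_norm hq (x + δ • y - l • x)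
    simp only [map_sub, map_add, map_smul, smul_eq_mul, hl] at this
    linarith
  nlinarith [mul_le_mul_of_nonneg_right hδ.1 hqy]

end decomposition

section construction

variable {ε : ℝ}

lemma exists_lam_le_apply_sub_le_lam (hε0 : 0 < ε) (hε1 : ε ≤ 1 / 2) {x z : X}
    {p : X →L[ℝ] ℝ} (hx : ‖x‖ = 1) (hz : ‖z‖ = 1) (hxz : ‖x - z‖ = ε) (hp : ‖p‖ = 1)
    (hpx : p x = 1) :
    ∃ y : X, ‖y‖ = 1 ∧ (∀ t : ℝ, ‖x‖ ≤ ‖x + t • y‖) ∧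
      lam x y (ε / 2) ≤ p (x - z) ∧ p (x - z) ≤ lam x y (2 * ε) := by
  obtain ⟨y, m, hy, hpy, hm, hmr, hzxy⟩ :=
    exists_eq_smul_add_smul hx hz hp hpx (hxz ▸ hε0) (by linarith)
  have hxy := norm_le_norm_add_smul_of_apply_eq_zero hx hp hpx hpy
  obtain ⟨hr0, hrε⟩ := hxz ▸ apply_sub_mem_Icc hz hp hpx
  obtain ⟨hmr, hmr'⟩ := abs_le.1 (hxz ▸ hmr)
  refine ⟨y, hy, hxy, ?_, le_lam_of_eq_smul_add_smul hx hy hxy hz hzxy ⟨hr0, by linarith⟩ hm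
    ⟨by linarith, by linarith⟩ (by linarith)⟩
  rcases le_or_gt (ε / 2) m with h | h
  · calc lam x y (ε / 2) ≤ ε / 2 / m * p (x - z) :=
          lam_le_of_eq_smul_add_smul hx hxy hz hzxy hr0 hm ⟨by positivity, h⟩
      _ ≤ p (x - z) := mul_le_of_le_one_left hr0 ((div_le_one hm).2 h)
  · linarith [lam_le_self hx hy hxy (δ := ε / 2) ⟨by positivity, by linarith⟩]

variable {x y : X}

lemma exists_apply_sub_le_lam (hε0 : 0 < ε) (hε1 : ε ≤ 1 / 2) (hx : ‖x‖ = 1) (hy : ‖y‖ = 1)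
    (hxy : ∀ t : ℝ, ‖x‖ ≤ ‖x + t • y‖) :
    ∃ (z : X) (p : X →L[ℝ] ℝ), ‖z‖ = 1 ∧ ‖x - z‖ = ε ∧ ‖p‖ = 1 ∧ p x = 1 ∧
      p (x - z) ≤ lam x y (2 * ε) := by
  obtain ⟨p, hp, hpx, hpy⟩ := exists_norm_eq_one_apply_eq_one_apply_eq_zero hx hxy
  have hδ : 2 * ε ∈ Icc (0 : ℝ) 1 := ⟨by linarith, by linarith⟩
  set L := lam x y (2 * ε)
  have hL0 : 0 ≤ L := lam_nonneg hx hxy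
  have hL := lam_le_self hx hy hxy hδ
  set w := x + (2 * ε) • y - L • x
  have hpw : p w = 1 - L := by simp [w, hpx, hpy]
  have hxw : ε ≤ ‖x - w‖ := by
    have hxw' : x - w = L • x - (2 * ε) • y := by module
    have h1 : L ≤ ‖x - w‖ := by simpa [hxw', hpx, hpy] using apply_le_norm hp (x - w)
    have h2 := norm_sub_norm_le ((2 * ε) • y) (L • x)
    rw [norm_smul, norm_smul, hy, hx, Real.norm_of_nonneg hδ.1, Real.norm_of_nonneg hL0,
      norm_sub_rev, ← hxw'] at h2
    linarith
  obtain ⟨z, hz, hxz, hwz⟩ := exists_norm_sub_eq_apply_ge hx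
    (norm_add_smul_sub_lam_smul_eq_one hx hy hxy hδ) hp hpx (by linarith) hε0.le hxw
  refine ⟨z, p, hz, hxz, hp, hpx, ?_⟩
  rw [map_sub, hpx]
  linarith

lemma exists_lam_le_apply_sub (hε0 : 0 < ε) (hε2 : ε ≤ 2) (hx : ‖x‖ = 1) (hy : ‖y‖ = 1)
    (hxy : ∀ t : ℝ, ‖x‖ ≤ ‖x + t • y‖) :
    ∃ (z : X) (p : X →L[ℝ] ℝ), ‖z‖ = 1 ∧ ‖x - z‖ = ε ∧ ‖p‖ = 1 ∧ p x = 1 ∧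
      lam x y (ε / 2) ≤ p (x - z) := by
  obtain ⟨p, hp, hpx, hpy⟩ := exists_norm_eq_one_apply_eq_one_apply_eq_zero hx hxy
  have hδ : ε / 2 ∈ Icc (0 : ℝ) 1 := ⟨by linarith, by linarith⟩
  set L := lam x y (ε / 2)
  have hL0 : 0 ≤ L := lam_nonneg hx hxy
  have hL := lam_le_self hx hy hxy hδ
  set w := x + (ε / 2) • y - L • x
  have hpw : p w = 1 - L := by simp [w, hpx, hpy]
  have hwx : w ≠ x := by
    intro h
    have hL : L = 0 := by linarith [h ▸ hpw]
    simp [w, hL, hε0.ne'] at h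
    simp [h] at hy
  have hxw : ‖x - w‖ ≤ ε := by
    calc ‖x - w‖ = ‖L • x - (ε / 2) • y‖ := by congr 1; module
      _ ≤ ‖L • x‖ + ‖(ε / 2) • y‖ := norm_sub_le _ _
      _ ≤ ε := by
        rw [norm_smul, norm_smul, hx, hy, Real.norm_of_nonneg hL0, Real.norm_of_nonneg hδ.1]
        linarith
  obtain ⟨z, hz, hxz, hzw⟩ := exists_norm_sub_eq_apply_le hx
    (norm_add_smul_sub_lam_smul_eq_one hx hy hxy hδ) hp hpx (by linarith) hwx hxw hε2
  refine ⟨z, p, hz, hxz, hp, hpx, ?_⟩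
  rw [map_sub, hpx]
  linarith

end construction

section moduli

variable (X)

def lamValues (δ : ℝ) : Set ℝ :=
  {r : ℝ | ∃ x y : X, ‖x‖ = 1 ∧ ‖y‖ = 1 ∧ (∀ t : ℝ, ‖x‖ ≤ ‖x + t • y‖) ∧ r = lam x y δ}

def phiValues (ε : ℝ) : Set ℝ :=
  {r : ℝ | ∃ (x z : X) (p : X →L[ℝ] ℝ), ‖x‖ = 1 ∧ ‖z‖ = 1 ∧ ‖x - z‖ = ε ∧
    ‖p‖ = 1 ∧ p x = 1 ∧ r = p (x - z)}

lemma lamMinus_eq_sInf (δ : ℝ) : lamMinus X δ = sInf (lamValues X δ) := rfl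

lemma lamPlus_eq_sSup (δ : ℝ) : lamPlus X δ = sSup (lamValues X δ) := rfl

lemma phiMinus_eq_sInf (ε : ℝ) : phiMinus X ε = sInf (phiValues X ε) := rfl

lemma phiPlus_eq_sSup (ε : ℝ) : phiPlus X ε = sSup (phiValues X ε) := rfl

variable {X} {ε : ℝ}

lemma lamValues_subset_Icc {δ : ℝ} (hδ : δ ∈ Icc (0 : ℝ) 1) : lamValues X δ ⊆ Icc 0 δ := by
  rintro _ ⟨x, y, hx, hy, hxy, rfl⟩
  exact ⟨lam_nonneg hx hxy, lam_le_self hx hy hxy hδ⟩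

lemma phiValues_subset_Icc (ε : ℝ) : phiValues X ε ⊆ Icc 0 ε := by
  rintro _ ⟨x, z, p, -, hz, hxz, hp, hpx, rfl⟩
  exact hxz ▸ apply_sub_mem_Icc hz hp hpx

lemma exists_mem_lamValues_le (hε0 : 0 < ε) (hε1 : ε ≤ 1 / 2) :
    ∀ r ∈ phiValues X ε, ∃ a ∈ lamValues X (ε / 2), a ≤ r := by
  rintro _ ⟨x, z, p, hx, hz, hxz, hp, hpx, rfl⟩
  obtain ⟨y, hy, hxy, hle, -⟩ := exists_lam_le_apply_sub_le_lam hε0 hε1 hx hz hxz hp hpx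
  exact ⟨_, ⟨x, y, hx, hy, hxy, rfl⟩, hle⟩

lemma exists_mem_lamValues_ge (hε0 : 0 < ε) (hε1 : ε ≤ 1 / 2) :
    ∀ r ∈ phiValues X ε, ∃ a ∈ lamValues X (2 * ε), r ≤ a := by
  rintro _ ⟨x, z, p, hx, hz, hxz, hp, hpx, rfl⟩
  obtain ⟨y, hy, hxy, -, hge⟩ := exists_lam_le_apply_sub_le_lam hε0 hε1 hx hz hxz hp hpx
  exact ⟨_, ⟨x, y, hx, hy, hxy, rfl⟩, hge⟩

lemma exists_mem_phiValues_le (hε0 : 0 < ε) (hε1 : ε ≤ 1 / 2) :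
    ∀ a ∈ lamValues X (2 * ε), ∃ r ∈ phiValues X ε, r ≤ a := by
  rintro _ ⟨x, y, hx, hy, hxy, rfl⟩
  obtain ⟨z, p, hz, hxz, hp, hpx, hle⟩ := exists_apply_sub_le_lam hε0 hε1 hx hy hxy
  exact ⟨_, ⟨x, z, p, hx, hz, hxz, hp, hpx, rfl⟩, hle⟩

lemma exists_mem_phiValues_ge (hε0 : 0 < ε) (hε2 : ε ≤ 2) :
    ∀ a ∈ lamValues X (ε / 2), ∃ r ∈ phiValues X ε, a ≤ r := by
  rintro _ ⟨x, y, hx, hy, hxy, rfl⟩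
  obtain ⟨z, p, hz, hxz, hp, hpx, hge⟩ := exists_lam_le_apply_sub hε0 hε2 hx hy hxy
  exact ⟨_, ⟨x, z, p, hx, hz, hxz, hp, hpx, rfl⟩, hge⟩

end moduli

end normed

theorem stmt4_general {X : Type*} [NormedAddCommGroup X] [NormedSpace ℝ X]
    (ε : ℝ) (hε : ε ∈ Set.Icc (0:ℝ) (1/2)) :
    lamMinus X (ε / 2) ≤ phiMinus X ε ∧ phiMinus X ε ≤ lamMinus X (2 * ε) ∧
    lamPlus X (ε / 2) ≤ phiPlus X ε ∧ phiPlus X ε ≤ lamPlus X (2 * ε) := by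
  obtain ⟨hε0, hε1⟩ := hε
  rcases hε0.eq_or_lt with rfl | hε0
  · obtain ⟨hL, hL'⟩ := Real.sInf_eq_zero_and_sSup_eq_zero_of_subset_zero
      (by simpa using lamValues_subset_Icc (X := X) (δ := 0) ⟨le_rfl, zero_le_one⟩)
    obtain ⟨hP, hP'⟩ := Real.sInf_eq_zero_and_sSup_eq_zero_of_subset_zero
      (by simpa using phiValues_subset_Icc (X := X) 0)
    simp [lamMinus_eq_sInf, lamPlus_eq_sSup, phiMinus_eq_sInf, phiPlus_eq_sSup, hL, hL', hP, hP']
  have hP := phiValues_subset_Icc (X := X) ε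
  have hL₁ := lamValues_subset_Icc (X := X) (δ := ε / 2) ⟨by positivity, by linarith⟩
  have hL₂ := lamValues_subset_Icc (X := X) (δ := 2 * ε) ⟨by positivity, by linarith⟩
  have hle := exists_mem_lamValues_le (X := X) hε0 hε1
  have hge := exists_mem_lamValues_ge (X := X) hε0 hε1
  have hle' := exists_mem_phiValues_le (X := X) hε0 hε1
  have hge' := exists_mem_phiValues_ge (X := X) hε0 (by linarith)
  exact ⟨Real.sInf_le_sInf_of_forall_exists_le (bddBelow_Icc.mono hL₁) hle
      (.of_forall_exists_mem hge'),
    Real.sInf_le_sInf_of_forall_exists_le (bddBelow_Icc.mono hP) hle'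
      (.of_forall_exists_mem hge),
    Real.sSup_le_sSup_of_forall_exists_le (bddAbove_Icc.mono hP) hge'
      (.of_forall_exists_mem hle),
    Real.sSup_le_sSup_of_forall_exists_le (bddAbove_Icc.mono hL₂) hge
      (.of_forall_exists_mem hle')⟩

theorem stmt4 {X : Type*} [NormedAddCommGroup X] [NormedSpace ℝ X] [CompleteSpace X]
    (ε : ℝ) (hε : ε ∈ Set.Icc (0:ℝ) (1/2)) :
    lamMinus X (ε / 2) ≤ phiMinus X ε ∧ phiMinus X ε ≤ lamMinus X (2 * ε) ∧
    lamPlus X (ε / 2) ≤ phiPlus X ε ∧ phiPlus X ε ≤ lamPlus X (2 * ε) :=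
  stmt4_general ε hε
end

section
/- Let γ⁺_X(ε) = sup{(p₁ − p₂)(x₁ − x₂) : x₁, x₂ ∈ S, ‖x₁ − x₂‖ = ε, p₁ ∈ J₁(x₁), p₂ ∈ J₁(x₂)} and γ⁻_X(ε) be the corresponding infimum. Then γ⁺_X and γ⁻_X are monotonically increasing functions on [0,2]. -/
noncomputable def gammaMinus (X : Type*) [NormedAddCommGroup X] [NormedSpace ℝ X] (ε : ℝ) : ℝ :=
  sInf {r : ℝ | ∃ (x₁ x₂ : X) (p₁ p₂ : X →L[ℝ] ℝ), ‖x₁‖ = 1 ∧ ‖x₂‖ = 1 ∧ ‖x₁ - x₂‖ = ε ∧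
    ‖p₁‖ = 1 ∧ p₁ x₁ = 1 ∧ ‖p₂‖ = 1 ∧ p₂ x₂ = 1 ∧ r = (p₁ - p₂) (x₁ - x₂)}

noncomputable def gammaPlus (X : Type*) [NormedAddCommGroup X] [NormedSpace ℝ X] (ε : ℝ) : ℝ :=
  sSup {r : ℝ | ∃ (x₁ x₂ : X) (p₁ p₂ : X →L[ℝ] ℝ), ‖x₁‖ = 1 ∧ ‖x₂‖ = 1 ∧ ‖x₁ - x₂‖ = ε ∧
    ‖p₁‖ = 1 ∧ p₁ x₁ = 1 ∧ ‖p₂‖ = 1 ∧ p₂ x₂ = 1 ∧ r = (p₁ - p₂) (x₁ - x₂)}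

section Aux

variable {X : Type*} [NormedAddCommGroup X] [NormedSpace ℝ X]

/-- The set over which the inf/sup is taken. -/
def gSet (X : Type*) [NormedAddCommGroup X] [NormedSpace ℝ X] (ε : ℝ) : Set ℝ :=
  {r : ℝ | ∃ (x₁ x₂ : X) (p₁ p₂ : X →L[ℝ] ℝ), ‖x₁‖ = 1 ∧ ‖x₂‖ = 1 ∧ ‖x₁ - x₂‖ = ε ∧
    ‖p₁‖ = 1 ∧ p₁ x₁ = 1 ∧ ‖p₂‖ = 1 ∧ p₂ x₂ = 1 ∧ r = (p₁ - p₂) (x₁ - x₂)}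

lemma gammaMinus_eq (ε : ℝ) : gammaMinus X ε = sInf (gSet X ε) := rfl
lemma gammaPlus_eq (ε : ℝ) : gammaPlus X ε = sSup (gSet X ε) := rfl

lemma core_scalar {s t P12 P21 P23 P13 P31 : ℝ} (hs : 0 < s) (hs1 : s ≤ 1)
    (ht0 : 0 ≤ t) (ht1 : t < 1) (h2t : 2*t - 1 ≤ s)
    (E1 : P12*s = (1-t) + t*P13) (E2 : (1-t)*P21 + t*P23 = s)
    (I1 : (1-t)*P31 + t ≤ s) (I2 : P23 ≤ 1) (I3u : P13 ≤ 1) (I3l : -1 ≤ P13) :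
    P13 + P31 ≤ P12 + P21 := by
  have h10 : 0 ≤ (1-t) + P13*(t-s) := by
    rcases le_or_gt t s with h | h
    · nlinarith
    · nlinarith
  have hpos : 0 < (1-t)*s := mul_pos (by linarith) hs
  nlinarith [mul_nonneg (by linarith : (0:ℝ) ≤ 1-t) h10,
    mul_le_mul_of_nonneg_left I1 hs.le,
    mul_le_mul_of_nonneg_left I2 (mul_nonneg hs.le ht0),
    mul_le_mul_of_nonneg_left E2.le hs.le]

lemma unit_pair_bound {p : X →L[ℝ] ℝ} {x : X} (hp : ‖p‖ = 1) (hx : ‖x‖ = 1) :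
    p x ≤ 1 ∧ -1 ≤ p x := by
  have h := p.le_opNorm x
  rw [hp, hx, Real.norm_eq_abs] at h
  have := abs_le.mp (by linarith : |p x| ≤ 1)
  exact ⟨this.2, this.1⟩

lemma core_geom {x₁ x₂ x₃ : X} {p₁ p₂ p₃ : X →L[ℝ] ℝ} {t : ℝ}
    (ht0 : 0 ≤ t) (ht1 : t < 1)
    (hx₁ : ‖x₁‖ = 1) (hx₃ : ‖x₃‖ = 1)
    (hz : (1-t)•x₁ + t•x₃ ≠ 0)
    (hx₂ : x₂ = ‖(1-t)•x₁ + t•x₃‖⁻¹ • ((1-t)•x₁ + t•x₃))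
    (hp₁ : ‖p₁‖ = 1) (hp₁x : p₁ x₁ = 1)
    (hp₂ : ‖p₂‖ = 1) (hp₂x : p₂ x₂ = 1)
    (hp₃ : ‖p₃‖ = 1) (hp₃x : p₃ x₃ = 1) :
    (p₁ - p₂) (x₁ - x₂) ≤ (p₁ - p₃) (x₁ - x₃) := by
  set z : X := (1-t)•x₁ + t•x₃ with hzdef
  set s : ℝ := ‖z‖ with hsdef
  have hs : 0 < s := norm_pos_iff.mpr hz
  have hnt : (0:ℝ) ≤ 1 - t := by linarith
  have hs1 : s ≤ 1 := by
    calc s ≤ ‖(1-t)•x₁‖ + ‖t•x₃‖ := norm_add_le _ _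
    _ = (1-t) + t := by
        rw [norm_smul, norm_smul, hx₁, hx₃, Real.norm_eq_abs, Real.norm_eq_abs,
          abs_of_nonneg ht0, abs_of_nonneg hnt]; ring
    _ ≤ 1 := by linarith
  have h2t : 2*t - 1 ≤ s := by
    have he : t•x₃ = z - (1-t)•x₁ := by rw [hzdef]; abel
    have : ‖t•x₃‖ ≤ ‖z‖ + ‖(1-t)•x₁‖ := he ▸ norm_sub_le _ _
    rw [norm_smul, norm_smul, hx₁, hx₃, Real.norm_eq_abs, Real.norm_eq_abs,
      abs_of_nonneg ht0, abs_of_nonneg hnt] at this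
    simp only [mul_one] at this; linarith
  have hp₁z : p₁ z = (1-t) + t * p₁ x₃ := by
    simp only [hzdef, map_add, map_smul, smul_eq_mul, hp₁x]; ring
  have hp₂z : p₂ z = s := by
    have h1 : p₂ x₂ = s⁻¹ * p₂ z := by rw [hx₂]; simp [map_smul]
    rw [h1] at hp₂x
    field_simp at hp₂x
    linarith
  have hp₃z : p₃ z ≤ s := by
    calc p₃ z ≤ ‖p₃ z‖ := le_abs_self _
    _ ≤ ‖p₃‖ * ‖z‖ := p₃.le_opNorm z
    _ = s := by rw [hp₃]; ring
  have hp₃z' : (1-t) * p₃ x₁ + t ≤ s := by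
    have he : p₃ z = (1-t) * p₃ x₁ + t := by
      simp only [hzdef, map_add, map_smul, smul_eq_mul, hp₃x]; ring
    linarith [he ▸ hp₃z]
  have hp₂z' : (1-t) * p₂ x₁ + t * p₂ x₃ = s := by
    have he : p₂ z = (1-t) * p₂ x₁ + t * p₂ x₃ := by
      simp only [hzdef, map_add, map_smul, smul_eq_mul]
    linarith [he ▸ hp₂z]
  have hp₁x₂ : p₁ x₂ * s = (1-t) + t * p₁ x₃ := by
    have h1 : p₁ x₂ = s⁻¹ * p₁ z := by rw [hx₂]; simp [map_smul]
    rw [h1, hp₁z]; field_simp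
  obtain ⟨h13u, h13l⟩ := unit_pair_bound hp₁ hx₃
  obtain ⟨h23u, _⟩ := unit_pair_bound hp₂ hx₃
  have key := core_scalar hs hs1 ht0 ht1 h2t hp₁x₂ hp₂z' hp₃z' h23u h13u h13l
  simp only [ContinuousLinearMap.sub_apply, map_sub]
  rw [hp₁x, hp₂x, hp₃x]
  linarith

lemma path_cont (x₁ : X) {φ : ℝ → X} (hφ : Continuous φ)
    (hne : ∀ t ∈ Set.Icc (0:ℝ) 1, φ t ≠ 0) :
    ContinuousOn (fun t => ‖x₁ - ‖φ t‖⁻¹ • φ t‖) (Set.Icc 0 1) := by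
  apply ContinuousOn.norm
  apply ContinuousOn.sub continuousOn_const
  exact ContinuousOn.smul ((hφ.norm.continuousOn).inv₀
    (fun t ht => norm_ne_zero_iff.mpr (hne t ht))) hφ.continuousOn

lemma norm_normalized {v : X} (hv : v ≠ 0) : ‖(‖v‖⁻¹ • v)‖ = 1 := by
  rw [norm_smul, Real.norm_eq_abs, abs_of_nonneg (inv_nonneg.mpr (norm_nonneg v))]
  field_simp [norm_ne_zero_iff.mpr hv]

lemma comb_ne_zero {x y : X} (hx : ‖x‖ = 1) (hy : ‖y‖ = 1) (hne : y ≠ -x)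
    {t : ℝ} (ht : t ∈ Set.Icc (0:ℝ) 1) : (1-t)•x + t•y ≠ 0 := by
  intro h
  have h1 : (1-t)•x = -(t•y) := by
    have := h; rw [add_eq_zero_iff_eq_neg] at this; exact this
  have h2 : ‖(1-t)•x‖ = ‖t•y‖ := by rw [h1, norm_neg]
  rw [norm_smul, norm_smul, hx, hy, Real.norm_eq_abs, Real.norm_eq_abs,
    abs_of_nonneg ht.1, abs_of_nonneg (by linarith [ht.2] : (0:ℝ) ≤ 1-t)] at h2
  simp only [mul_one] at h2
  have ht2 : t = 1/2 := by linarith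
  apply hne
  rw [ht2] at h
  have h3 : (1/2 : ℝ) • (x + y) = 0 := by rw [smul_add]; convert h using 2 <;> norm_num
  have hxy : x + y = 0 := by
    rcases smul_eq_zero.mp h3 with h' | h'
    · norm_num at h'
    · exact h'
  linear_combination (norm := abel) hxy

lemma exists_down {x₁ x₃ : X} {p₁ p₃ : X →L[ℝ] ℝ}
    (hx₁ : ‖x₁‖ = 1) (hx₃ : ‖x₃‖ = 1) (hne : x₃ ≠ -x₁)
    (hp₁ : ‖p₁‖ = 1) (hp₁x : p₁ x₁ = 1) (hp₃ : ‖p₃‖ = 1) (hp₃x : p₃ x₃ = 1)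
    {ε₁ : ℝ} (h0 : 0 ≤ ε₁) (hlt : ε₁ < ‖x₁ - x₃‖) :
    ∃ (x₂ : X) (p₂ : X →L[ℝ] ℝ), ‖x₂‖ = 1 ∧ ‖x₁ - x₂‖ = ε₁ ∧ ‖p₂‖ = 1 ∧ p₂ x₂ = 1 ∧
      (p₁ - p₂) (x₁ - x₂) ≤ (p₁ - p₃) (x₁ - x₃) := by
  set φ : ℝ → X := fun t => (1-t)•x₁ + t•x₃ with hφdef
  have hφc : Continuous φ := by fun_prop
  have hφne : ∀ t ∈ Set.Icc (0:ℝ) 1, φ t ≠ 0 := fun t ht => comb_ne_zero hx₁ hx₃ hne ht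
  have gcont := path_cont x₁ hφc hφne
  have hg0 : ‖x₁ - ‖φ 0‖⁻¹ • φ 0‖ = 0 := by simp [hφdef, hx₁]
  have hg1 : ‖x₁ - ‖φ 1‖⁻¹ • φ 1‖ = ‖x₁ - x₃‖ := by simp [hφdef, hx₃]
  have hmem : ε₁ ∈ Set.Icc (‖x₁ - ‖φ 0‖⁻¹ • φ 0‖) (‖x₁ - ‖φ 1‖⁻¹ • φ 1‖) := by
    rw [hg0, hg1]; exact ⟨h0, hlt.le⟩
  obtain ⟨t, ht, hgt0⟩ := intermediate_value_Icc (by norm_num : (0:ℝ) ≤ 1) gcont hmem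
  have hgt : ‖x₁ - ‖φ t‖⁻¹ • φ t‖ = ε₁ := hgt0
  have ht1 : t < 1 := by
    rcases lt_or_eq_of_le ht.2 with h | h
    · exact h
    · exfalso; rw [h, hg1] at hgt; linarith
  have hzne := hφne t ht
  have hx₂n : ‖(‖φ t‖⁻¹ • φ t : X)‖ = 1 := norm_normalized hzne
  obtain ⟨p₂, hp₂, hp₂x⟩ := exists_dual_vector ℝ (‖φ t‖⁻¹ • φ t)
    (by rw [← norm_ne_zero_iff, hx₂n]; norm_num)
  have hp₂x' : p₂ (‖φ t‖⁻¹ • φ t) = 1 := by rw [hp₂x]; simpa using hx₂n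
  exact ⟨‖φ t‖⁻¹ • φ t, p₂, hx₂n, hgt, hp₂, hp₂x',
    core_geom ht.1 ht1 hx₁ hx₃ hzne rfl hp₁ hp₁x hp₂ hp₂x' hp₃ hp₃x⟩

lemma exists_up {x₁ x₂ : X} {p₁ p₂ : X →L[ℝ] ℝ}
    (hx₁ : ‖x₁‖ = 1) (hx₂ : ‖x₂‖ = 1) (hne : x₂ ≠ x₁)
    (hp₁ : ‖p₁‖ = 1) (hp₁x : p₁ x₁ = 1) (hp₂ : ‖p₂‖ = 1) (hp₂x : p₂ x₂ = 1)
    {ε₂ : ℝ} (hlt : ‖x₁ - x₂‖ < ε₂) (h2 : ε₂ ≤ 2) :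
    ∃ (x₃ : X) (p₃ : X →L[ℝ] ℝ), ‖x₃‖ = 1 ∧ ‖x₁ - x₃‖ = ε₂ ∧ ‖p₃‖ = 1 ∧ p₃ x₃ = 1 ∧
      (p₁ - p₂) (x₁ - x₂) ≤ (p₁ - p₃) (x₁ - x₃) := by
  set φ : ℝ → X := fun t => (1-t)•x₂ + t•(-x₁) with hφdef
  have hφc : Continuous φ := by fun_prop
  have hnx₁ : ‖(-x₁ : X)‖ = 1 := by rw [norm_neg]; exact hx₁
  have hφne : ∀ t ∈ Set.Icc (0:ℝ) 1, φ t ≠ 0 := fun t ht =>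
    comb_ne_zero hx₂ hnx₁ (fun h => hne (neg_injective h).symm) ht
  have gcont := path_cont x₁ hφc hφne
  have hg0 : ‖x₁ - ‖φ 0‖⁻¹ • φ 0‖ = ‖x₁ - x₂‖ := by simp [hφdef, hx₂]
  have hg1 : ‖x₁ - ‖φ 1‖⁻¹ • φ 1‖ = 2 := by
    have h3 : x₁ - (-x₁) = (2:ℝ) • x₁ := by module
    simp [hφdef, hnx₁, h3, norm_smul, hx₁]
  have hmem : ε₂ ∈ Set.Icc (‖x₁ - ‖φ 0‖⁻¹ • φ 0‖) (‖x₁ - ‖φ 1‖⁻¹ • φ 1‖) := by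
    rw [hg0, hg1]; exact ⟨hlt.le, h2⟩
  obtain ⟨t, ht, hgt0⟩ := intermediate_value_Icc (by norm_num : (0:ℝ) ≤ 1) gcont hmem
  have hgt : ‖x₁ - ‖φ t‖⁻¹ • φ t‖ = ε₂ := hgt0
  have ht0 : 0 < t := by
    rcases lt_or_eq_of_le ht.1 with h | h
    · exact h
    · exfalso; rw [← h, hg0] at hgt; linarith
  have hzne := hφne t ht
  set m : ℝ := ‖φ t‖ with hmdef
  have hm : 0 < m := norm_pos_iff.mpr hzne
  set x₃ : X := m⁻¹ • φ t with hx₃def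
  have hx₃n : ‖x₃‖ = 1 := norm_normalized hzne
  obtain ⟨p₃, hp₃, hp₃x⟩ := exists_dual_vector ℝ x₃
    (by rw [← norm_ne_zero_iff, hx₃n]; norm_num)
  have hp₃x' : p₃ x₃ = 1 := by rw [hp₃x]; simpa using hx₃n
  refine ⟨x₃, p₃, hx₃n, hgt, hp₃, hp₃x', ?_⟩
  rcases eq_or_lt_of_le ht.2 with hteq | htlt
  · -- t = 1 : x₃ = -x₁, RHS = 4
    have hφ1 : φ t = -x₁ := by rw [hteq]; simp [hφdef]
    have hm1 : m = 1 := by rw [hmdef, hφ1]; exact hnx₁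
    have hx₃e : x₃ = -x₁ := by rw [hx₃def, hφ1, hm1]; simp
    have hp₃x₁ : p₃ x₁ = -1 := by
      have : p₃ (-x₁) = 1 := hx₃e ▸ hp₃x'
      rw [map_neg] at this; linarith
    obtain ⟨hu1, hl1⟩ := unit_pair_bound hp₁ hx₂
    obtain ⟨hu2, hl2⟩ := unit_pair_bound hp₂ hx₁
    simp only [ContinuousLinearMap.sub_apply, map_sub, hx₃e, map_neg]
    rw [hp₁x, hp₂x, hp₃x₁]
    linarith
  · -- t < 1 : x₂ is the normalized combination of x₁ and x₃ with parameter T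
    set T : ℝ := m / (t + m) with hTdef
    have htm : 0 < t + m := by linarith
    have hT0 : 0 ≤ T := div_nonneg hm.le htm.le
    have hT1 : T < 1 := by
      rw [hTdef, div_lt_one htm]; linarith
    have hc : (0:ℝ) < (1-t)/(t+m) := div_pos (by linarith) htm
    have hz'eq : (1-T)•x₁ + T•x₃ = ((1-t)/(t+m)) • x₂ := by
      rw [hTdef, hx₃def, hφdef]
      match_scalars <;> field_simp <;> ring
    have hz'ne : (1-T)•x₁ + T•x₃ ≠ 0 := by
      rw [hz'eq]
      exact smul_ne_zero (ne_of_gt hc) (by rw [← norm_ne_zero_iff, hx₂]; norm_num)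
    have hnz' : ‖(1-T)•x₁ + T•x₃‖ = (1-t)/(t+m) := by
      rw [hz'eq, norm_smul, Real.norm_eq_abs, abs_of_pos hc, hx₂, mul_one]
    have hx₂eq : x₂ = ‖(1-T)•x₁ + T•x₃‖⁻¹ • ((1-T)•x₁ + T•x₃) := by
      have h1t : (1:ℝ) - t ≠ 0 := by linarith
      have htm' : t + m ≠ 0 := ne_of_gt htm
      rw [hnz', hz'eq, smul_smul, inv_div]
      have hone : (t + m) / (1 - t) * ((1 - t) / (t + m)) = 1 := by field_simp
      rw [hone, one_smul]
    exact core_geom hT0 hT1 hx₁ hx₃n hz'ne hx₂eq hp₁ hp₁x hp₂ hp₂x hp₃ hp₃x'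

lemma gSet_bounds {ε r : ℝ} (h : r ∈ gSet X ε) : 0 ≤ r ∧ r ≤ 4 := by
  obtain ⟨x₁, x₂, p₁, p₂, hx₁, hx₂, -, hp₁, hp₁x, hp₂, hp₂x, hr⟩ := h
  obtain ⟨hu1, hl1⟩ := unit_pair_bound hp₁ hx₂
  obtain ⟨hu2, hl2⟩ := unit_pair_bound hp₂ hx₁
  rw [hr]
  simp only [ContinuousLinearMap.sub_apply, map_sub]
  rw [hp₁x, hp₂x]
  constructor <;> linarith

lemma gSet_bddBelow (ε : ℝ) : BddBelow (gSet X ε) := ⟨0, fun r hr => (gSet_bounds hr).1⟩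
lemma gSet_bddAbove (ε : ℝ) : BddAbove (gSet X ε) := ⟨4, fun r hr => (gSet_bounds hr).2⟩

lemma gammaMinus_le_four (ε : ℝ) : gammaMinus X ε ≤ 4 := by
  rw [gammaMinus_eq]
  rcases Set.eq_empty_or_nonempty (gSet X ε) with h | ⟨r, hr⟩
  · rw [h, Real.sInf_empty]; norm_num
  · exact le_trans (csInf_le (gSet_bddBelow ε) hr) (gSet_bounds hr).2

lemma gammaPlus_nonneg (ε : ℝ) : 0 ≤ gammaPlus X ε := by
  rw [gammaPlus_eq]
  rcases Set.eq_empty_or_nonempty (gSet X ε) with h | ⟨r, hr⟩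
  · rw [h, Real.sSup_empty]
  · exact le_trans (gSet_bounds hr).1 (le_csSup (gSet_bddAbove ε) hr)

end Aux

theorem stmt14 {X : Type*} [NormedAddCommGroup X] [NormedSpace ℝ X] [CompleteSpace X] :
    MonotoneOn (gammaMinus X) (Set.Icc (0:ℝ) 2) ∧
    MonotoneOn (gammaPlus X) (Set.Icc (0:ℝ) 2) := by
  constructor
  · -- gammaMinus monotone
    intro ε₁ hε₁ ε₂ hε₂ hle
    rcases eq_or_lt_of_le hle with rfl | hlt
    · exact le_refl _
    rw [gammaMinus_eq, gammaMinus_eq]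
    rcases Set.eq_empty_or_nonempty (gSet X ε₂) with hA2 | hA2
    · -- A₂ empty: must show sInf A₁ ≤ 0
      rw [hA2, Real.sInf_empty]
      rcases Set.eq_empty_or_nonempty (gSet X ε₁) with hA1 | ⟨r, hr⟩
      · rw [hA1, Real.sInf_empty]
      · have hr2 := hr
        obtain ⟨x₁, x₂, p₁, p₂, hx₁, hx₂, hd, hp₁, hp₁x, hp₂, hp₂x, hr'⟩ := hr2
        by_cases hxe : x₂ = x₁
        · have hr0 : r = 0 := by rw [hr', hxe]; simp
          have h := csInf_le (gSet_bddBelow (X := X) ε₁) hr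
          rw [hr0] at h; exact h
        · exfalso
          obtain ⟨x₃, p₃, hx₃, hd₃, hp₃, hp₃x, -⟩ :=
            exists_up hx₁ hx₂ hxe hp₁ hp₁x hp₂ hp₂x (by rw [hd]; exact hlt) hε₂.2
          have hmem2 : ((p₁ - p₃) (x₁ - x₃)) ∈ gSet X ε₂ :=
            ⟨x₁, x₃, p₁, p₃, hx₁, hx₃, hd₃, hp₁, hp₁x, hp₃, hp₃x, rfl⟩
          rw [hA2] at hmem2
          exact hmem2
    · -- A₂ nonempty
      apply le_csInf hA2
      intro v hv
      obtain ⟨x₁, x₃, p₁, p₃, hx₁, hx₃, hd, hp₁, hp₁x, hp₃, hp₃x, hv'⟩ := hv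
      by_cases hne : x₃ = -x₁
      · -- v = 4
        have hp₁x₃ : p₁ x₃ = -1 := by rw [hne, map_neg, hp₁x]
        have hp₃x₁ : p₃ x₁ = -1 := by
          have : p₃ (-x₁) = 1 := hne ▸ hp₃x
          rw [map_neg] at this; linarith
        have hv4 : v = 4 := by
          rw [hv']
          simp only [ContinuousLinearMap.sub_apply, map_sub]
          rw [hp₁x, hp₃x, hp₁x₃, hp₃x₁]; ring
        rw [hv4]
        exact gammaMinus_le_four ε₁
      · obtain ⟨x₂, p₂, hx₂, hd₂, hp₂, hp₂x, hval⟩ :=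
          exists_down hx₁ hx₃ hne hp₁ hp₁x hp₃ hp₃x hε₁.1 (by rw [hd]; exact hlt)
        calc sInf (gSet X ε₁) ≤ (p₁ - p₂) (x₁ - x₂) :=
              csInf_le (gSet_bddBelow ε₁)
                ⟨x₁, x₂, p₁, p₂, hx₁, hx₂, hd₂, hp₁, hp₁x, hp₂, hp₂x, rfl⟩
        _ ≤ (p₁ - p₃) (x₁ - x₃) := hval
        _ = v := hv'.symm
  · -- gammaPlus monotone
    intro ε₁ hε₁ ε₂ hε₂ hle
    rcases eq_or_lt_of_le hle with rfl | hlt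
    · exact le_refl _
    rw [gammaPlus_eq, gammaPlus_eq]
    rcases Set.eq_empty_or_nonempty (gSet X ε₁) with hA1 | hA1
    · rw [hA1, Real.sSup_empty]
      exact gammaPlus_nonneg ε₂
    apply csSup_le hA1
    intro v hv
    obtain ⟨x₁, x₂, p₁, p₂, hx₁, hx₂, hd, hp₁, hp₁x, hp₂, hp₂x, hv'⟩ := hv
    by_cases hxe : x₂ = x₁
    · have hv0 : v = 0 := by rw [hv', hxe]; simp
      rw [hv0]
      exact gammaPlus_nonneg ε₂
    · obtain ⟨x₃, p₃, hx₃, hd₃, hp₃, hp₃x, hval⟩ :=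
        exists_up hx₁ hx₂ hxe hp₁ hp₁x hp₂ hp₂x (by rw [hd]; exact hlt) hε₂.2
      calc v = (p₁ - p₂) (x₁ - x₂) := hv'
      _ ≤ (p₁ - p₃) (x₁ - x₃) := hval
      _ ≤ sSup (gSet X ε₂) := le_csSup (gSet_bddAbove ε₂)
            ⟨x₁, x₃, p₁, p₃, hx₁, hx₃, hd₃, hp₁, hp₁x, hp₃, hp₃x, rfl⟩
end
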